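/- arXiv:1602.07819 — 3 statements merged into one kernel-verified Lean document; each statement's English description precedes it below -/
import Mathlib

section
/- Consider f and h as in (P₁), let v ∈ ℝ, and suppose: (i) there exist points v₋ and v₊ with h(v₋) < 0 and h(v₊) > 0; and (ii) k ≥ 1 or αᵢ ≠ 0 for some i. Then the following are equivalent: (E₁) for every (x,u,w), h(x,u,w) = 0 implies f(x,u,w) + v ≥ 0; (E₂) for every x, y ∈ ℝ^l and z ∈ ℝ^k satisfying Σᵢ(αᵢyᵢ + bᵢxᵢ) + Σⱼ zⱼ + c = 0 and ½xᵢ² ≤ yᵢ for all i, one has Σᵢ(δᵢyᵢ + eᵢxᵢ) + Σⱼ ζⱼzⱼ + c₀ + v ≥ 0. -/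
open scoped Classical

set_option maxHeartbeats 2000000

lemma aux_unbdd (β γ G : ℝ) (hβ : β < 0) : ∃ S, 1 ≤ S ∧ (1/2)*β*S^2 + γ*S ≤ G := by
  refine ⟨max 1 ((2*(|γ| + |G| + 1))/(-β)), le_max_left _ _, ?_⟩
  set S := max 1 ((2*(|γ| + |G| + 1))/(-β)) with hS
  have h1 : (1:ℝ) ≤ S := le_max_left _ _
  have h2 : (2*(|γ| + |G| + 1))/(-β) ≤ S := le_max_right _ _
  have h3 : 2*(|γ| + |G| + 1) ≤ (-β) * S := by
    rw [div_le_iff₀ (by linarith)] at h2; linarith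
  nlinarith [le_abs_self γ, le_abs_self G, neg_abs_le G, abs_nonneg γ, abs_nonneg G]

lemma exists_lite (β γ u v : ℝ) (h : v^2/2 ≤ u) : ∃ t, (1/2)*β*t^2 + γ*t ≤ β*u + γ*v := by
  rcases le_or_gt 0 β with hβ | hβ
  · exact ⟨v, by nlinarith⟩
  · obtain ⟨S, _, hS⟩ := aux_unbdd β γ (β*u + γ*v) hβ
    exact ⟨S, hS⟩

set_option maxHeartbeats 1000000 in
lemma lemL1 (a b d e u v : ℝ) (ha : a ≠ 0) (h : v^2/2 ≤ u) :
    ∃ t, (1/2)*a*t^2 + b*t = a*u + b*v ∧ (1/2)*d*t^2 + e*t ≤ d*u + e*v := by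
  have hvu : 0 ≤ 2*u - v^2 := by linarith
  set D := b^2 + 2*a^2*u + 2*a*b*v with hDdef
  have hD0 : 0 ≤ D := by nlinarith [sq_nonneg (b + a*v), mul_nonneg (sq_nonneg a) hvu]
  set s := Real.sqrt D with hsdef
  have hs2 : s^2 = D := Real.sq_sqrt hD0
  have hsnn : 0 ≤ s := Real.sqrt_nonneg D
  have hsw : |b + a*v| ≤ s := by
    rw [← Real.sqrt_sq_eq_abs]
    exact Real.sqrt_le_sqrt (by nlinarith [mul_nonneg (sq_nonneg a) hvu])
  set ε : ℝ := if 0 ≤ d*b - e*a then 1 else -1 with hεdef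
  have hε : ε^2 = 1 := by rw [hεdef]; split <;> norm_num
  set t := (-b + ε*s)/a with htdef
  have hat : a * t = -b + ε*s := by rw [htdef]; field_simp
  have heq : (1/2)*a*t^2 + b*t = a*u + b*v := by
    have key : 2*a*((1/2)*a*t^2 + b*t) = 2*a*(a*u + b*v) := by
      have h1 : (a*t)^2 = b^2 - 2*b*(ε*s) + ε^2*s^2 := by rw [hat]; ring
      calc 2*a*((1/2)*a*t^2 + b*t) = (a*t)^2 + 2*b*(a*t) := by ring
        _ = b^2 - 2*b*(ε*s) + ε^2*s^2 + 2*b*(-b + ε*s) := by rw [h1, hat]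
        _ = s^2 - b^2 := by rw [hε]; ring
        _ = 2*a*(a*u + b*v) := by rw [hs2, hDdef]; ring
    exact mul_left_cancel₀ (by simp [ha] : (2:ℝ)*a ≠ 0) key
  clear_value D s ε t
  refine ⟨t, heq, ?_⟩
  have ht2 : a*t^2 = 2*a*u + 2*b*(v - t) := by linarith [heq]
  have hid : a*((d*u + e*v) - ((1/2)*d*t^2 + e*t)) = (t - v)*(d*b - e*a) := by
    linear_combination (-(d/2)) * ht2
  have hat' : a*(t - v) = ε*s - (b + a*v) := by rw [mul_sub, hat]; ring
  have hsign : 0 ≤ (ε*s - (b + a*v))*(d*b - e*a) := by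
    rw [hεdef]
    rcases abs_le.mp hsw with ⟨hw1, hw2⟩
    split
    · rename_i hX; nlinarith
    · rename_i hX; nlinarith [le_of_not_ge hX]
  have ha2 : 0 < a^2 := by positivity
  have h5 : a^2 * ((d*u + e*v) - ((1/2)*d*t^2 + e*t)) = (ε*s - (b + a*v))*(d*b - e*a) := by
    calc a^2 * ((d*u + e*v) - ((1/2)*d*t^2 + e*t))
        = a * (a*((d*u + e*v) - ((1/2)*d*t^2 + e*t))) := by ring
      _ = a * ((t - v)*(d*b - e*a)) := by rw [hid]
      _ = (a*(t - v))*(d*b - e*a) := by ring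
      _ = (ε*s - (b + a*v))*(d*b - e*a) := by rw [hat']
  nlinarith [h5, hsign, ha2]

lemma lemL2 (a b d e μ a₀ u v : ℝ) (ha₀ : a₀ ≠ 0) (h : v^2/2 ≤ u) :
    ∃ t, 0 ≤ a₀ * ((a*u + b*v) - ((1/2)*a*t^2 + b*t)) ∧
      (1/2)*d*t^2 + e*t + μ*((a*u + b*v) - ((1/2)*a*t^2 + b*t)) ≤ d*u + e*v := by
  rcases eq_or_ne a 0 with rfl | ha
  · set γ := e - μ*b with hγ
    set σ : ℝ := if 0 ≤ a₀*b then 1 else -1 with hσ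
    have hσb : 0 ≤ a₀*b*σ := by
      rw [hσ]; split
      · rename_i h'; simpa using h'
      · rename_i h'; nlinarith [le_of_not_ge h']
    rcases le_or_gt 0 d with hd | hd
    · refine ⟨v, by simp, ?_⟩
      nlinarith
    · obtain ⟨S, hS1, hS2⟩ := aux_unbdd d (-σ*(d*v + γ)) (d*(u - v^2/2)) hd
      refine ⟨v - σ*S, ?_, ?_⟩
      · have : (0:ℝ) ≤ a₀*b*σ*S := by nlinarith
        calc (0:ℝ) ≤ a₀*b*σ*S := this
          _ = a₀ * ((0*u + b*v) - ((1/2)*0*(v - σ*S)^2 + b*(v - σ*S))) := by ring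
      · have hσ2 : σ^2 = 1 := by rw [hσ]; split <;> norm_num
        have expand : (1/2)*d*(v - σ*S)^2 + e*(v - σ*S) + μ*((0*u + b*v) - ((1/2)*0*(v - σ*S)^2 + b*(v - σ*S)))
            = ((1/2)*d*v^2 + e*v) + σ^2*((1/2)*d*S^2) + (-σ*(d*v + γ))*S := by rw [hγ]; ring
        rw [expand, hσ2]
        nlinarith [hS2]
  · obtain ⟨t, heq, hle⟩ := lemL1 a b d e u v ha h
    exact ⟨t, by rw [heq]; simp, by rw [heq]; simpa using hle⟩


/-- The objective `f(x,u,w) = Σᵢ(½δᵢxᵢ² + eᵢxᵢ) + Σⱼ(ζⱼuⱼwⱼ + ½wⱼ² + ηⱼwⱼ)` of problem (P₁). -/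
noncomputable def quadObj {l k : ℕ} (δ e : Fin l → ℝ) (ζ η : Fin k → ℝ)
    (x : Fin l → ℝ) (u w : Fin k → ℝ) : ℝ :=
  (∑ i, ((1/2) * δ i * x i ^ 2 + e i * x i)) +
    ∑ j, (ζ j * u j * w j + (1/2) * w j ^ 2 + η j * w j)

/-- The constraint function `h(x,u,w) = Σᵢ(½αᵢxᵢ² + bᵢxᵢ) + Σⱼ uⱼwⱼ + c` of problem (P₁). -/
noncomputable def quadCon {l k : ℕ} (α b : Fin l → ℝ) (c : ℝ)
    (x : Fin l → ℝ) (u w : Fin k → ℝ) : ℝ :=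
  (∑ i, ((1/2) * α i * x i ^ 2 + b i * x i)) + (∑ j, u j * w j) + c

/-- The SOCP objective `Σᵢ(δᵢyᵢ + eᵢxᵢ) + Σⱼ ζⱼzⱼ + c₀` of problem (P₂). -/
noncomputable def socpObj {l k : ℕ} (δ e : Fin l → ℝ) (ζ : Fin k → ℝ) (c₀ : ℝ)
    (x y : Fin l → ℝ) (z : Fin k → ℝ) : ℝ :=
  (∑ i, (δ i * y i + e i * x i)) + (∑ j, ζ j * z j) + c₀

/-- The linear part `Σᵢ(αᵢyᵢ + bᵢxᵢ) + Σⱼ zⱼ` of the SOCP constraint in (P₂). -/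
noncomputable def socpConLhs {l k : ℕ} (α b : Fin l → ℝ)
    (x y : Fin l → ℝ) (z : Fin k → ℝ) : ℝ :=
  (∑ i, (α i * y i + b i * x i)) + ∑ j, z j

/-- The simplified S-lemma with equality of Jiang–Li–Wu (Section 3.1): under the two-side
Slater condition and `A ≠ 0`, the implication `h(x,u,w) = 0 ⟹ f(x,u,w) + v ≥ 0` holds if and
only if the SOCP system of the reformulation certifies nonnegativity. -/
theorem stmt_16 (l k : ℕ) (δ e α b : Fin l → ℝ) (ζ η : Fin k → ℝ) (c c₀ v : ℝ)
    (hc₀ : c₀ = -(1/2) * ∑ j, η j ^ 2)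
    (hneg : ∃ (x : Fin l → ℝ) (u w : Fin k → ℝ), quadCon α b c x u w < 0)
    (hpos : ∃ (x : Fin l → ℝ) (u w : Fin k → ℝ), 0 < quadCon α b c x u w)
    (hAne : 1 ≤ k ∨ ∃ i, α i ≠ 0) :
    ((∀ (x : Fin l → ℝ) (u w : Fin k → ℝ),
        quadCon α b c x u w = 0 → 0 ≤ quadObj δ e ζ η x u w + v) ↔
      (∀ (x y : Fin l → ℝ) (z : Fin k → ℝ),
        socpConLhs α b x y z + c = 0 → (∀ i, (1/2) * x i ^ 2 ≤ y i) →
        0 ≤ socpObj δ e ζ c₀ x y z + v)) := by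
  constructor
  · intro hE1 x y z hcon hcone
    rcases Nat.eq_zero_or_pos k with hk0 | hk1
    · subst hk0
      replace hAne : ∃ i, α i ≠ 0 := by
        rcases hAne with h1 | h2
        · exact absurd h1 (by omega)
        · exact h2
      obtain ⟨i₀, hi₀⟩ := hAne
      simp only [socpConLhs, Finset.univ_eq_empty, Finset.sum_empty, add_zero] at hcon
      have hc₀0 : c₀ = 0 := by simpa using hc₀
      set μ := δ i₀ / α i₀ with hμ
      have hch : ∀ i : Fin l, ∃ t : ℝ,
          0 ≤ α i₀ * ((α i * y i + b i * x i) - ((1/2)*α i*t^2 + b i*t)) ∧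
          (1/2)*δ i*t^2 + e i*t + μ*((α i * y i + b i * x i) - ((1/2)*α i*t^2 + b i*t))
            ≤ δ i * y i + e i * x i :=
        fun i => lemL2 (α i) (b i) (δ i) (e i) μ (α i₀) (y i) (x i) hi₀
          (by have := hcone i; linarith)
      choose t ht1 ht2 using hch
      set Δ : Fin l → ℝ :=
        fun i => (α i * y i + b i * x i) - ((1/2)*α i*(t i)^2 + b i*(t i)) with hΔ
      set D := ∑ i ∈ Finset.univ.erase i₀, Δ i with hD
      have hDnn : 0 ≤ α i₀ * D := by
        rw [hD, Finset.mul_sum]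
        exact Finset.sum_nonneg fun i _ => ht1 i
      have hdiv : 0 ≤ D / α i₀ := by
        rcases hi₀.lt_or_gt with hne | hpo
        · have hD0 : D ≤ 0 := by nlinarith
          exact div_nonneg_iff.mpr (Or.inr ⟨hD0, hne.le⟩)
        · exact div_nonneg (by nlinarith) hpo.le
      obtain ⟨t₀, he0, hle0⟩ := lemL1 (α i₀) (b i₀) (δ i₀) (e i₀) (y i₀ + D / α i₀) (x i₀)
        hi₀ (by have := hcone i₀; linarith)
      set x' := Function.update t i₀ t₀ with hx'
      have hx'erase : ∀ i ∈ Finset.univ.erase i₀, x' i = t i :=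
        fun i hi => Function.update_of_ne (Finset.ne_of_mem_erase hi) t₀ t
      have hx'i₀ : x' i₀ = t₀ := Function.update_self i₀ t₀ t
      have hαD : α i₀ * (D / α i₀) = D := mul_div_cancel₀ _ hi₀
      have hδD : δ i₀ * (D / α i₀) = μ * D := by rw [hμ]; field_simp
      -- the constraint sum over erase
      have hconsum : ∑ i ∈ Finset.univ.erase i₀, ((1/2)*α i*(t i)^2 + b i*(t i))
          = (∑ i ∈ Finset.univ.erase i₀, (α i * y i + b i * x i)) - D := by
        rw [hD, ← Finset.sum_sub_distrib]
        exact Finset.sum_congr rfl fun i _ => by simp only [hΔ]; ring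
      have hconq : quadCon α b c x' Fin.elim0 Fin.elim0 = 0 := by
        simp only [quadCon, Finset.univ_eq_empty, Finset.sum_empty, add_zero]
        rw [← Finset.sum_erase_add _ _ (Finset.mem_univ i₀)]
        rw [Finset.sum_congr rfl fun i hi => by rw [hx'erase i hi]]
        rw [hconsum, hx'i₀, he0]
        have hsplit : (∑ i ∈ Finset.univ.erase i₀, (α i * y i + b i * x i))
            + (α i₀ * y i₀ + b i₀ * x i₀) = ∑ i, (α i * y i + b i * x i) :=
          Finset.sum_erase_add _ _ (Finset.mem_univ i₀)
        have : α i₀ * (y i₀ + D / α i₀) + b i₀ * x i₀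
            = (α i₀ * y i₀ + b i₀ * x i₀) + D := by rw [mul_add, hαD]; ring
        rw [this]
        linarith [hsplit, hcon]
      -- objective
      have happ := hE1 x' Fin.elim0 Fin.elim0 hconq
      simp only [quadObj, Finset.univ_eq_empty, Finset.sum_empty, add_zero] at happ
      rw [← Finset.sum_erase_add _ _ (Finset.mem_univ i₀),
        Finset.sum_congr rfl fun i hi => by rw [hx'erase i hi], hx'i₀] at happ
      have hobjsum : ∑ i ∈ Finset.univ.erase i₀, ((1/2)*δ i*(t i)^2 + e i*(t i))
          ≤ (∑ i ∈ Finset.univ.erase i₀, (δ i * y i + e i * x i)) - μ * D := by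
        have step : ∑ i ∈ Finset.univ.erase i₀, ((1/2)*δ i*(t i)^2 + e i*(t i))
            ≤ ∑ i ∈ Finset.univ.erase i₀, ((δ i * y i + e i * x i) - μ * Δ i) :=
          Finset.sum_le_sum fun i _ => by have := ht2 i; simp only [hΔ]; linarith
        rw [Finset.sum_sub_distrib, ← Finset.mul_sum, ← hD] at step
        exact step
      have hle0' : (1/2)*δ i₀*t₀^2 + e i₀*t₀ ≤ (δ i₀ * y i₀ + e i₀ * x i₀) + μ * D := by
        have : δ i₀ * (y i₀ + D / α i₀) + e i₀ * x i₀
            = (δ i₀ * y i₀ + e i₀ * x i₀) + μ * D := by rw [mul_add, hδD]; ring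
        linarith [hle0, this]
      have hsplit2 : (∑ i ∈ Finset.univ.erase i₀, (δ i * y i + e i * x i))
          + (δ i₀ * y i₀ + e i₀ * x i₀) = ∑ i, (δ i * y i + e i * x i) :=
        Finset.sum_erase_add _ _ (Finset.mem_univ i₀)
      simp only [socpObj, Finset.univ_eq_empty, Finset.sum_empty, add_zero, hc₀0]
      have h1 : ∑ i ∈ Finset.univ.erase i₀, ((1/2) * δ i * (t i) ^ 2 + e i * (t i))
          = ∑ i ∈ Finset.univ.erase i₀, ((1/2)*δ i*(t i)^2 + e i*(t i)) := rfl
      linarith [happ, hobjsum, hle0', hsplit2]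
    · -- k ≥ 1
      set j₀ : Fin k := ⟨0, hk1⟩ with hj₀
      by_contra hcontra
      push_neg at hcontra
      set ε := -(socpObj δ e ζ c₀ x y z + v) with hε
      have hεpos : 0 < ε := by rw [hε]; linarith
      have hkpos : (0:ℝ) < (k:ℝ) + 1 := by positivity
      set τ := Real.sqrt (ε / ((k:ℝ)+1)) with hτ
      have hτpos : 0 < τ := Real.sqrt_pos.mpr (by positivity)
      have hτ2 : τ^2 = ε / ((k:ℝ)+1) := Real.sq_sqrt (by positivity)
      set μ := ζ j₀ with hμ
      have hch : ∀ i : Fin l, ∃ t : ℝ, (1/2)*(δ i - μ*α i)*t^2 + (e i - μ*b i)*t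
          ≤ (δ i - μ*α i)*(y i) + (e i - μ*b i)*(x i) :=
        fun i => exists_lite (δ i - μ*α i) (e i - μ*b i) (y i) (x i) (by have := hcone i; linarith)
      choose t ht using hch
      have ht' : ∀ i, (1/2)*δ i*(t i)^2 + e i*(t i)
          ≤ (δ i * y i + e i * x i)
            - μ*((α i * y i + b i * x i) - ((1/2)*α i*(t i)^2 + b i*(t i))) :=
        fun i => by have := ht i; linarith
      set D := (∑ i, (α i * y i + b i * x i)) - ∑ i, ((1/2)*α i*(t i)^2 + b i*(t i)) with hD
      have hsum : ∑ i, ((1/2)*δ i*(t i)^2 + e i*(t i))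
          ≤ (∑ i, (δ i * y i + e i * x i)) - μ*D := by
        have step := Finset.sum_le_sum (fun i (_ : i ∈ Finset.univ) => ht' i)
        rw [Finset.sum_sub_distrib, ← Finset.mul_sum, Finset.sum_sub_distrib] at step
        rw [hD]; linarith [step]
      set w' : Fin k → ℝ := fun j => if η j = 0 then τ else -η j with hw'
      have hwne : ∀ j, w' j ≠ 0 := by
        intro j; rw [hw']; dsimp only; split
        · exact ne_of_gt hτpos
        · rename_i h'; exact neg_ne_zero.mpr h'
      set p : Fin k → ℝ := fun j => z j + if j = j₀ then D else 0 with hp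
      set u' : Fin k → ℝ := fun j => p j / w' j with hu'
      have hpw : ∀ j, u' j * w' j = p j := fun j => div_mul_cancel₀ _ (hwne j)
      have hqcon : quadCon α b c t u' w' = 0 := by
        simp only [quadCon]
        have h1 : ∑ j, u' j * w' j = (∑ j, z j) + D := by
          rw [Finset.sum_congr rfl (fun j _ => hpw j)]
          simp only [hp]
          rw [Finset.sum_add_distrib, Finset.sum_ite_eq' Finset.univ j₀ (fun _ => D)]
          simp
        rw [h1]
        have hcon' := hcon
        simp only [socpConLhs] at hcon'
        rw [hD]; linarith [hcon']
      have happ := hE1 t u' w' hqcon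
      simp only [quadObj] at happ
      have hjterm : ∀ j ∈ Finset.univ, ζ j * u' j * w' j + (1/2) * w' j ^ 2 + η j * w' j
          ≤ (ζ j * z j + (if j = j₀ then ζ j * D else 0)) + (-(1/2) * η j ^ 2 + (1/2)*τ^2) := by
        intro j _
        have h1 : ζ j * u' j * w' j = ζ j * p j := by rw [mul_assoc, hpw j]
        have h2 : ζ j * p j = ζ j * z j + (if j = j₀ then ζ j * D else 0) := by
          rw [hp]; dsimp only; split <;> ring
        rw [h1, h2]
        have h3 : (1/2) * w' j ^ 2 + η j * w' j ≤ -(1/2) * η j ^ 2 + (1/2)*τ^2 := by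
          rw [hw']; dsimp only; split
          · rename_i h'; rw [h']; nlinarith
          · nlinarith [sq_nonneg τ]
        linarith
      have hjsum := Finset.sum_le_sum hjterm
      have hrhs : ∑ j, ((ζ j * z j + if j = j₀ then ζ j * D else 0) + (-(1/2) * η j ^ 2 + (1/2)*τ^2))
          = (∑ j, ζ j * z j) + ζ j₀ * D + ((-(1/2)) * (∑ j, η j ^ 2) + (k:ℝ)*((1/2)*τ^2)) := by
        rw [Finset.sum_add_distrib, Finset.sum_add_distrib, Finset.sum_add_distrib,
          Finset.sum_ite_eq' Finset.univ j₀ (fun j => ζ j * D), ← Finset.mul_sum,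
          Finset.sum_const, Finset.card_univ, Fintype.card_fin, nsmul_eq_mul]
        simp
      rw [hrhs] at hjsum
      have hprod : μ * D = ζ j₀ * D := by rw [hμ]
      have hτsmall : (k:ℝ)*((1/2)*τ^2) < ε := by
        have h7 : ((k:ℝ)+1) * τ^2 = ε := by rw [hτ2]; field_simp
        have h8 : 0 < τ^2 := pow_pos hτpos 2
        have hk0 : (0:ℝ) ≤ (k:ℝ) := Nat.cast_nonneg k
        nlinarith [h7, h8, hk0]
      have hV : socpObj δ e ζ c₀ x y z = -ε - v := by rw [hε]; ring
      simp only [socpObj] at hV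
      rw [hc₀] at hV
      linarith [happ, hsum, hjsum, hτsmall, hV, hprod]
  · -- easy direction
    intro hE2 x u w hq
    simp only [quadCon] at hq
    have hsoc := hE2 x (fun i => (1/2) * x i ^ 2) (fun j => u j * w j) ?_ ?_
    · simp only [socpObj] at hsoc
      simp only [quadObj]
      have h1 : ∑ i, (δ i * ((fun i => (1/2) * x i ^ 2) i) + e i * x i)
          = ∑ i, ((1/2) * δ i * x i ^ 2 + e i * x i) :=
        Finset.sum_congr rfl fun i _ => by ring
      have h3 : ∑ j, (ζ j * ((fun j => u j * w j) j) - (1/2) * η j ^ 2)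
          ≤ ∑ j, (ζ j * u j * w j + (1/2) * w j ^ 2 + η j * w j) :=
        Finset.sum_le_sum fun j _ => by nlinarith [sq_nonneg (w j + η j)]
      have h4 : ∑ j, (ζ j * ((fun j => u j * w j) j) - (1/2) * η j ^ 2)
          = (∑ j, ζ j * ((fun j => u j * w j) j)) - (1/2) * ∑ j, η j ^ 2 := by
        rw [Finset.sum_sub_distrib, ← Finset.mul_sum]
      rw [h1] at hsoc
      linarith [hsoc, h3, h4]
    · simp only [socpConLhs]
      have h1 : ∑ i, (α i * ((fun i => (1/2) * x i ^ 2) i) + b i * x i)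
          = ∑ i, ((1/2) * α i * x i ^ 2 + b i * x i) :=
        Finset.sum_congr rfl fun i _ => by ring
      rw [h1]; linarith [hq]
    · intro i; exact le_refl _
end

section
/- Consider f as in (P₁), define h̄(x,u,w) = Σᵢ(½αᵢxᵢ² + bᵢxᵢ) + Σⱼ uⱼwⱼ, and let c₁ ≤ c₂ be reals. Consider the interval-constrained problem (IP): minimize f(x,u,w) subject to c₁ ≤ h̄(x,u,w) ≤ c₂. Suppose: (i) (IP) has at least one feasible point; (ii) for each i ∈ {1,2}, it is NOT the case that A_s is positive semidefinite and there exists ω with b_s = A_sω and cᵢ = ½ωᵀA_sω; and (iii) A_s ≠ 0. Then the infimum of (IP) equals the infimum of the problem (IP₁): minimize Σᵢ(δᵢyᵢ + eᵢxᵢ) + Σⱼ ζⱼzⱼ + c₀ over x, y ∈ ℝ^l, z ∈ ℝ^k subject to c₁ ≤ Σᵢ(αᵢyᵢ + bᵢxᵢ) + Σⱼ zⱼ ≤ c₂ and ½xᵢ² ≤ yᵢ for all i (as extended real numbers). Moreover, if (IP₁) attains its infimum, then it attains it at a point with ½x̄ᵢ² = ȳᵢ for all i; and if ζᵢ ≠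 ζⱼ for some i ≠ j, then (IP) is unbounded from below. -/
open scoped Classical
open Matrix

/-- The constraint function `h̄(x,u,w) = Σᵢ(½αᵢxᵢ² + bᵢxᵢ) + Σⱼ uⱼwⱼ` (no constant term). -/
noncomputable def quadConBar {l k : ℕ} (α b : Fin l → ℝ)
    (x : Fin l → ℝ) (u w : Fin k → ℝ) : ℝ :=
  (∑ i, ((1/2) * α i * x i ^ 2 + b i * x i)) + ∑ j, u j * w j

/-- The `(l+2k) × (l+2k)` real symmetric matrix
`A_s = blockDiag(α₁, …, α_l, E₂, …, E₂)` with `k` copies of `E₂ = [[0,1],[1,0]]`. -/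
noncomputable def Asmat (l k : ℕ) (α : Fin l → ℝ) :
    Matrix (Fin (l + 2 * k)) (Fin (l + 2 * k)) ℝ :=
  fun i j =>
    if hi : (i : ℕ) < l then (if i = j then α ⟨(i : ℕ), hi⟩ else 0)
    else if _hj : (j : ℕ) < l then 0
    else if ((i : ℕ) - l) / 2 = ((j : ℕ) - l) / 2 ∧ ((i : ℕ) - l) % 2 ≠ ((j : ℕ) - l) % 2
      then 1 else 0

/-- The vector `b_s = (b₁, …, b_l, 0, …, 0) ∈ ℝ^{l+2k}`. -/
noncomputable def bsvec (l k : ℕ) (b : Fin l → ℝ) : Fin (l + 2 * k) → ℝ :=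
  fun i => if hi : (i : ℕ) < l then b ⟨(i : ℕ), hi⟩ else 0

/-- The degenerate case excluded by Assumption 3.2 of Jiang–Li–Wu: `A_s ⪰ 0`,
`b_s ∈ Range(A_s)` and `c' = ½ωᵀA_sω` for `ω` with `b_s = A_sω`. -/
def DegenerateCase (l k : ℕ) (α b : Fin l → ℝ) (c' : ℝ) : Prop :=
  (Asmat l k α).PosSemidef ∧ ∃ ω : Fin (l + 2 * k) → ℝ,
    bsvec l k b = (Asmat l k α).mulVec ω ∧ c' = (1/2) * (ω ⬝ᵥ (Asmat l k α).mulVec ω)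

/-- The optimal value (in the extended reals) of the interval-constrained SOCP problem (IP₁). -/
noncomputable def socpValInt {l k : ℕ} (δ e α b : Fin l → ℝ) (ζ : Fin k → ℝ)
    (c₀ c₁ c₂ : ℝ) : EReal :=
  sInf {v : EReal | ∃ (x y : Fin l → ℝ) (z : Fin k → ℝ),
    c₁ ≤ socpConLhs α b x y z ∧ socpConLhs α b x y z ≤ c₂ ∧ (∀ i, (1/2) * x i ^ 2 ≤ y i) ∧
    v = (socpObj δ e ζ c₀ x y z : EReal)}


section Helpers

lemma ereal_le_coe_of_forall {a : EReal} {w : ℝ}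
    (h : ∀ ε : ℝ, 0 < ε → a ≤ ((w + ε : ℝ) : EReal)) : a ≤ (w : EReal) := by
  by_contra hlt
  push_neg at hlt
  obtain ⟨r, hr1, hr2⟩ := EReal.exists_between_coe_real hlt
  have := h (r - w) (by exact_mod_cast sub_pos.mpr (by exact_mod_cast hr1))
  rw [show w + (r - w) = r by ring] at this
  exact absurd (this.trans_lt hr2) (lt_irrefl _)

lemma ereal_eq_bot {a : EReal} (h : ∀ M : ℝ, a ≤ (M : EReal)) : a = ⊥ := by
  by_contra hb
  obtain ⟨r, hr1, hr2⟩ := EReal.exists_between_coe_real (Ne.bot_lt hb)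
  exact absurd ((h r).trans_lt hr2) (lt_irrefl _)

lemma sum_subst {n : ℕ} (i : Fin n) (F : Fin n → ℝ → ℝ) (v : Fin n → ℝ) (t : ℝ) :
    ∑ m, F m (if m = i then t else v m) = F i t - F i (v i) + ∑ m, F m (v m) := by
  have : ∀ m : Fin n, F m (if m = i then t else v m)
      = (if m = i then F i t - F i (v i) else 0) + F m (v m) := by
    intro m; split_ifs with h
    · subst h; ring
    · ring
  rw [Finset.sum_congr rfl (fun m _ => this m), Finset.sum_add_distrib,
    Finset.sum_ite_eq' Finset.univ i (fun _ => F i t - F i (v i)), if_pos (Finset.mem_univ i)]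

lemma quad_small' (A B C M s₀ : ℝ) (hA : A < 0) :
    ∃ s : ℝ, s₀ ≤ s ∧ A * s ^ 2 + B * s + C < M := by
  set X := |B| + |C| + |M| + 1 with hX
  have hX1 : 1 ≤ X := by nlinarith [abs_nonneg B, abs_nonneg C, abs_nonneg M]
  refine ⟨max s₀ (X / (-A) + 1), le_max_left _ _, ?_⟩
  set s := max s₀ (X / (-A) + 1) with hs
  have hs2 : X / (-A) + 1 ≤ s := le_max_right _ _
  have hdiv : 0 ≤ X / (-A) := div_nonneg (by linarith) (by linarith)
  have hs1 : 1 ≤ s := le_trans (by linarith) hs2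
  have hAs : A * s ≤ -X + A := by
    have hAne : A ≠ 0 := ne_of_lt hA
    have h1 : (-A) * (X / (-A) + 1) = X + (-A) := by
      rw [mul_add, mul_one, mul_div_cancel₀ _ (by linarith : (-A) ≠ 0)]
    nlinarith [mul_le_mul_of_nonneg_left hs2 (le_of_lt (neg_pos.mpr hA))]
  have h2 : A * s ^ 2 ≤ (-X + A) * s := by nlinarith
  have h3 : B * s ≤ |B| * s := by nlinarith [le_abs_self B, abs_nonneg B]
  nlinarith [le_abs_self C, le_abs_self M, neg_abs_le M, abs_nonneg B, abs_nonneg C, abs_nonneg M]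

lemma oneDim (α b δ e x y : ℝ) (hc : α ≠ 0 ∨ (α = 0 ∧ 0 ≤ δ)) (hxy : (1/2) * x ^ 2 ≤ y) :
    ∃ x' : ℝ, (1/2) * α * x' ^ 2 + b * x' = α * y + b * x
      ∧ (1/2) * δ * x' ^ 2 + e * x' ≤ δ * y + e * x := by
  rcases hc with hα | ⟨hα0, hδ⟩
  · obtain ⟨q, hq⟩ : ∃ q : ℝ, α * q = b := ⟨b / α, mul_div_cancel₀ b hα⟩
    obtain ⟨ρ, hρ0, hρ2⟩ : ∃ ρ : ℝ, 0 ≤ ρ ∧ ρ ^ 2 = (x + q) ^ 2 + 2 * (y - (1/2) * x ^ 2) :=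
      ⟨Real.sqrt ((x + q) ^ 2 + 2 * (y - (1/2) * x ^ 2)), Real.sqrt_nonneg _,
        Real.sq_sqrt (by nlinarith)⟩
    have hsq : 0 ≤ ρ ^ 2 - (x + q) ^ 2 := by linarith
    have habs1 : -ρ ≤ x + q := by
      by_contra h; push_neg at h
      have h2 : 0 < ρ - (x + q) := by linarith
      have h3 : 0 < -(ρ + (x + q)) := by linarith
      nlinarith [mul_pos h2 h3]
    have habs2 : x + q ≤ ρ := by
      by_contra h; push_neg at h
      have h2 : 0 < x + q - ρ := by linarith
      have h3 : 0 < x + q + ρ := by linarith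
      nlinarith [mul_pos h2 h3]
    obtain ⟨σ, hσ2, hle⟩ : ∃ σ : ℝ, σ ^ 2 = 1 ∧ (e - δ * q) * (σ * ρ - (x + q)) ≤ 0 := by
      rcases le_or_gt 0 (e - δ * q) with h | h
      · exact ⟨-1, by ring, mul_nonpos_of_nonneg_of_nonpos h (by linarith)⟩
      · exact ⟨1, by ring, mul_nonpos_of_nonpos_of_nonneg (le_of_lt h) (by linarith)⟩
    refine ⟨σ * ρ - q, ?_, ?_⟩
    · linear_combination ((1/2)*α*ρ^2) * hσ2 + ((1/2)*α) * hρ2 + (x + q - σ*ρ) * hq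
    · have hdiff : (1/2) * δ * (σ * ρ - q) ^ 2 + e * (σ * ρ - q) - (δ * y + e * x)
          = (e - δ * q) * (σ * ρ - (x + q)) := by
        linear_combination ((1/2)*δ*ρ^2) * hσ2 + ((1/2)*δ) * hρ2
      linarith
  · refine ⟨x, by rw [hα0]; ring, by nlinarith⟩

lemma sum_one_val {n : ℕ} (i : Fin n) (F : Fin n → ℝ → ℝ) (hF0 : ∀ m, F m 0 = 0) (a : ℝ) :
    ∑ m, F m (if m = i then a else 0) = F i a := by
  have h : ∀ m : Fin n, F m (if m = i then a else 0) = if m = i then F i a else 0 := by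
    intro m; split_ifs with h
    · subst h; rfl
    · exact hF0 m
  rw [Finset.sum_congr rfl (fun m _ => h m),
    Finset.sum_ite_eq' Finset.univ i (fun _ => F i a), if_pos (Finset.mem_univ i)]

lemma sum_two_val {n : ℕ} {i j : Fin n} (hij : i ≠ j) (F : Fin n → ℝ → ℝ)
    (hF0 : ∀ m, F m 0 = 0) (a c : ℝ) :
    ∑ m, F m (if m = i then a else if m = j then c else 0) = F i a + F j c := by
  have h : ∀ m : Fin n, F m (if m = i then a else if m = j then c else 0)
      = (if m = i then F i a else 0) + (if m = j then F j c else 0) := by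
    intro m
    by_cases h1 : m = i
    · subst h1; simp [hij]
    · by_cases h2 : m = j
      · subst h2; simp [h1]
      · simp [h1, h2, hF0]
  rw [Finset.sum_congr rfl (fun m _ => h m), Finset.sum_add_distrib,
    Finset.sum_ite_eq' Finset.univ i (fun _ => F i a), if_pos (Finset.mem_univ i),
    Finset.sum_ite_eq' Finset.univ j (fun _ => F j c), if_pos (Finset.mem_univ j)]

lemma sum_one_plain {n : ℕ} (i : Fin n) (a : ℝ) :
    ∑ m : Fin n, (if m = i then a else 0) = a := by
  rw [Finset.sum_ite_eq' Finset.univ i (fun _ => a), if_pos (Finset.mem_univ i)]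

lemma sum_two_plain {n : ℕ} {i j : Fin n} (hij : i ≠ j) (a c : ℝ) :
    ∑ m : Fin n, (if m = i then a else if m = j then c else 0) = a + c := by
  have h : ∀ m : Fin n, (if m = i then a else if m = j then c else 0)
      = (if m = i then a else 0) + (if m = j then c else 0) := by
    intro m
    by_cases h1 : m = i
    · subst h1; simp [hij]
    · by_cases h2 : m = j
      · subst h2; simp [h1]
      · simp [h1, h2]
  rw [Finset.sum_congr rfl (fun m _ => h m), Finset.sum_add_distrib, sum_one_plain, sum_one_plain]

end Helpers
lemma transferSlack {l : ℕ} (α b δ e : Fin l → ℝ) (x y : Fin l → ℝ)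
    (hc : ∀ i, α i ≠ 0 ∨ (α i = 0 ∧ 0 ≤ δ i)) (hxy : ∀ i, (1/2) * x i ^ 2 ≤ y i) :
    ∃ x' : Fin l → ℝ,
      (∑ i, ((1/2) * α i * x' i ^ 2 + b i * x' i)) = (∑ i, (α i * y i + b i * x i)) ∧
      (∑ i, ((1/2) * δ i * x' i ^ 2 + e i * x' i)) ≤ (∑ i, (δ i * y i + e i * x i)) := by
  choose x' h1 h2 using fun i => oneDim (α i) (b i) (δ i) (e i) (x i) (y i) (hc i) (hxy i)
  exact ⟨x', Finset.sum_congr rfl (fun i _ => h1 i), Finset.sum_le_sum (fun i _ => h2 i)⟩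

lemma sum_zero_quad {l : ℕ} (A B : Fin l → ℝ) :
    ∑ i, ((1/2) * A i * (0:Fin l → ℝ) i ^ 2 + B i * (0:Fin l → ℝ) i) = 0 :=
  Finset.sum_eq_zero (fun i _ => by simp)

lemma unb_zeta {l k : ℕ} (δ e α b : Fin l → ℝ) (ζ η : Fin k → ℝ) (c₁ c₂ : ℝ) (hc₁₂ : c₁ ≤ c₂)
    {j₁ j₂ : Fin k} (hne : j₁ ≠ j₂) (hz : ζ j₁ ≠ ζ j₂) (M : ℝ) :
    ∃ (x : Fin l → ℝ) (u w : Fin k → ℝ),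
      c₁ ≤ quadConBar α b x u w ∧ quadConBar α b x u w ≤ c₂ ∧ quadObj δ e ζ η x u w < M := by
  set s : ℝ := (M - 1 - (ζ j₁ * c₁ + 1 + η j₁ + η j₂)) / (ζ j₁ - ζ j₂) with hs
  have hzs : (ζ j₁ - ζ j₂) * s = M - 1 - (ζ j₁ * c₁ + 1 + η j₁ + η j₂) := by
    rw [hs, mul_div_cancel₀ _ (sub_ne_zero.mpr hz)]
  set u : Fin k → ℝ := fun j => if j = j₁ then c₁ + s else if j = j₂ then -s else 0 with hu
  set w : Fin k → ℝ := fun j => if j = j₁ then 1 else if j = j₂ then 1 else 0 with hw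
  have hcw : ∀ j : Fin k, u j * w j = (if j = j₁ then c₁ + s else if j = j₂ then -s else 0) := by
    intro j
    by_cases h1 : j = j₁
    · simp [hu, hw, h1]
    · by_cases h2 : j = j₂ <;> simp [hu, hw, h1, h2]
  have hcon : quadConBar α b 0 u w = c₁ := by
    simp only [quadConBar]
    rw [Finset.sum_congr rfl (fun j _ => hcw j), sum_two_plain hne, sum_zero_quad α b]
    ring
  have hterm : ∀ j : Fin k,
      ζ j * u j * w j + (1/2) * w j ^ 2 + η j * w j
      = (if j = j₁ then ζ j₁ * (c₁ + s) + 1/2 + η j₁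
         else if j = j₂ then ζ j₂ * (-s) + 1/2 + η j₂ else 0) := by
    intro j
    by_cases h1 : j = j₁
    · subst h1; simp [hu, hw]; try ring
    · by_cases h2 : j = j₂
      · subst h2; simp [hu, hw, h1]; try ring
      · simp [hu, hw, h1, h2]
  have hobj : quadObj δ e ζ η 0 u w = M - 1 := by
    simp only [quadObj]
    rw [Finset.sum_congr rfl (fun j _ => hterm j), sum_two_plain hne, sum_zero_quad δ e]
    linarith [hzs]
  exact ⟨0, u, w, by rw [hcon], by rw [hcon]; exact hc₁₂, by rw [hobj]; linarith⟩
lemma exists_alpha_ne {l : ℕ} (α : Fin l → ℝ) (hAne : Asmat l 0 α ≠ 0) : ∃ i, α i ≠ 0 := by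
  by_contra hall
  push_neg at hall
  apply hAne
  ext i j
  have hi : (i : ℕ) < l := by have := i.2; omega
  simp only [Asmat, dif_pos hi, Matrix.zero_apply]
  split_ifs with h
  · exact hall _
  · rfl

lemma unb_alpha0 {l k : ℕ} (δ e α b : Fin l → ℝ) (ζ η : Fin k → ℝ) (c₁ c₂ : ℝ) (hc₁₂ : c₁ ≤ c₂)
    (hfeas : ∃ (x : Fin l → ℝ) (u w : Fin k → ℝ),
      c₁ ≤ quadConBar α b x u w ∧ quadConBar α b x u w ≤ c₂)
    {i₁ : Fin l} (hαi : α i₁ = 0) (hδi : δ i₁ < 0)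
    (hex : Nonempty (Fin k) ∨ ∃ i₀ : Fin l, α i₀ ≠ 0) (M : ℝ) :
    ∃ (x : Fin l → ℝ) (u w : Fin k → ℝ),
      c₁ ≤ quadConBar α b x u w ∧ quadConBar α b x u w ≤ c₂ ∧ quadObj δ e ζ η x u w < M := by
  by_cases hb : b i₁ = 0
  · -- update the feasible point at coordinate i₁; constraint unchanged
    obtain ⟨x₀, u₀, w₀, h1, h2⟩ := hfeas
    obtain ⟨s, -, hs⟩ := quad_small' ((1/2) * δ i₁) (e i₁)
      (quadObj δ e ζ η x₀ u₀ w₀ - ((1/2) * δ i₁ * (x₀ i₁) ^ 2 + e i₁ * x₀ i₁)) M 0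
      (by linarith)
    have hA : ∑ i, ((1/2) * α i * (if i = i₁ then s else x₀ i) ^ 2
          + b i * (if i = i₁ then s else x₀ i))
        = ((1/2) * α i₁ * s ^ 2 + b i₁ * s) - ((1/2) * α i₁ * (x₀ i₁) ^ 2 + b i₁ * (x₀ i₁))
          + ∑ i, ((1/2) * α i * x₀ i ^ 2 + b i * x₀ i) :=
      sum_subst i₁ (fun m t => (1/2) * α m * t ^ 2 + b m * t) x₀ s
    have hB : ∑ i, ((1/2) * δ i * (if i = i₁ then s else x₀ i) ^ 2
          + e i * (if i = i₁ then s else x₀ i))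
        = ((1/2) * δ i₁ * s ^ 2 + e i₁ * s) - ((1/2) * δ i₁ * (x₀ i₁) ^ 2 + e i₁ * (x₀ i₁))
          + ∑ i, ((1/2) * δ i * x₀ i ^ 2 + e i * x₀ i) :=
      sum_subst i₁ (fun m t => (1/2) * δ m * t ^ 2 + e m * t) x₀ s
    have hcon : quadConBar α b (fun i => if i = i₁ then s else x₀ i) u₀ w₀
        = quadConBar α b x₀ u₀ w₀ := by
      simp only [quadConBar]
      rw [hA, hαi, hb]; ring
    have hobj : quadObj δ e ζ η (fun i => if i = i₁ then s else x₀ i) u₀ w₀ < M := by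
      simp only [quadObj]
      simp only [quadObj] at hs
      rw [hB]
      linarith
    exact ⟨_, u₀, w₀, by rw [hcon]; exact h1, by rw [hcon]; exact h2, hobj⟩
  · rcases hex with hk | ⟨i₀, hα₀⟩
    · -- use a k-block to absorb the constraint shift
      obtain ⟨j₀⟩ := hk
      obtain ⟨s, -, hs⟩ := quad_small' ((1/2) * δ i₁) (e i₁ - ζ j₀ * b i₁)
        (ζ j₀ * c₁ + 1/2 + η j₀) M 0 (by linarith)
      have hxsum : ∑ i, ((1/2) * α i * (if i = i₁ then s else 0) ^ 2
            + b i * (if i = i₁ then s else 0))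
          = (1/2) * α i₁ * s ^ 2 + b i₁ * s :=
        sum_one_val i₁ (fun m t => (1/2) * α m * t ^ 2 + b m * t) (fun m => by simp) s
      have hxsum' : ∑ i, ((1/2) * δ i * (if i = i₁ then s else 0) ^ 2
            + e i * (if i = i₁ then s else 0))
          = (1/2) * δ i₁ * s ^ 2 + e i₁ * s :=
        sum_one_val i₁ (fun m t => (1/2) * δ m * t ^ 2 + e m * t) (fun m => by simp) s
      have huw : ∀ j : Fin k, (if j = j₀ then c₁ - b i₁ * s else 0) * (if j = j₀ then (1:ℝ) else 0)
          = (if j = j₀ then c₁ - b i₁ * s else 0) := by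
        intro j; by_cases h : j = j₀ <;> simp [h]
      have hkterm : ∀ j : Fin k, ζ j * (if j = j₀ then c₁ - b i₁ * s else 0)
            * (if j = j₀ then (1:ℝ) else 0)
            + (1/2) * (if j = j₀ then (1:ℝ) else 0) ^ 2 + η j * (if j = j₀ then (1:ℝ) else 0)
          = (if j = j₀ then ζ j₀ * (c₁ - b i₁ * s) + 1/2 + η j₀ else 0) := by
        intro j; by_cases h : j = j₀
        · subst h; simp
        · simp [h]
      have hcon : quadConBar α b (fun i => if i = i₁ then s else 0)
          (fun j => if j = j₀ then c₁ - b i₁ * s else 0) (fun j => if j = j₀ then 1 else 0)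
          = c₁ := by
        simp only [quadConBar]
        rw [Finset.sum_congr rfl (fun j _ => huw j), sum_one_plain, hxsum, hαi]
        ring
      have hobj : quadObj δ e ζ η (fun i => if i = i₁ then s else 0)
          (fun j => if j = j₀ then c₁ - b i₁ * s else 0) (fun j => if j = j₀ then 1 else 0)
          < M := by
        simp only [quadObj]
        rw [Finset.sum_congr rfl (fun j _ => hkterm j), sum_one_plain, hxsum']
        nlinarith [hs]
      exact ⟨_, _, _, by rw [hcon], by rw [hcon]; exact hc₁₂, hobj⟩
    · -- absorb into coordinate i₀ with α i₀ ≠ 0 (covers k = 0)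
      have hne : i₁ ≠ i₀ := by rintro rfl; exact hα₀ hαi
      have hb2 : 0 < b i₁ ^ 2 := by positivity
      have ha2 : 0 < α i₀ ^ 2 := by positivity
      have hA : (1/2) * δ i₁ * (α i₀) ^ 2 * (b i₁) ^ 2 < 0 := by
        nlinarith [mul_pos ha2 hb2]
      obtain ⟨s, hs₀, hs⟩ := quad_small' ((1/2) * δ i₁ * (α i₀) ^ 2 * (b i₁) ^ 2)
        (-(e i₁) * (α i₀ * b i₁) + δ i₀ * (b i₁) ^ 2) (δ i₀ * (c₁ / α i₀)) M
        (|c₁ / α i₀| / (b i₁) ^ 2) hA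
      set t : ℝ := -s * α i₀ * b i₁ with ht
      set Y : ℝ := c₁ / α i₀ + s * b i₁ ^ 2 with hY
      have hY0 : (1/2) * (0:ℝ) ^ 2 ≤ Y := by
        have h1 : |c₁ / α i₀| / (b i₁) ^ 2 * (b i₁) ^ 2 = |c₁ / α i₀| :=
          div_mul_cancel₀ _ (ne_of_gt hb2)
        have h2 : |c₁ / α i₀| ≤ s * b i₁ ^ 2 := by
          rw [← h1]; exact mul_le_mul_of_nonneg_right hs₀ (le_of_lt hb2)
        have h3 := neg_abs_le (c₁ / α i₀)
        rw [hY]; nlinarith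
      obtain ⟨x', hx'1, hx'2⟩ := oneDim (α i₀) (b i₀) (δ i₀) (e i₀) 0 Y (Or.inl hα₀) hY0
      have hxsum : ∑ i, ((1/2) * α i * (if i = i₁ then t else if i = i₀ then x' else 0) ^ 2
            + b i * (if i = i₁ then t else if i = i₀ then x' else 0))
          = ((1/2) * α i₁ * t ^ 2 + b i₁ * t) + ((1/2) * α i₀ * x' ^ 2 + b i₀ * x') :=
        sum_two_val hne (fun m q => (1/2) * α m * q ^ 2 + b m * q) (fun m => by simp) t x'
      have hxsum' : ∑ i, ((1/2) * δ i * (if i = i₁ then t else if i = i₀ then x' else 0) ^ 2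
            + e i * (if i = i₁ then t else if i = i₀ then x' else 0))
          = ((1/2) * δ i₁ * t ^ 2 + e i₁ * t) + ((1/2) * δ i₀ * x' ^ 2 + e i₀ * x') :=
        sum_two_val hne (fun m q => (1/2) * δ m * q ^ 2 + e m * q) (fun m => by simp) t x'
      have hαY : α i₀ * Y = c₁ + s * α i₀ * b i₁ ^ 2 := by
        rw [hY]; field_simp
      have hcon : quadConBar α b (fun i => if i = i₁ then t else if i = i₀ then x' else 0) (0 : Fin k → ℝ) (0 : Fin k → ℝ)
          = c₁ := by
        simp only [quadConBar]
        have h0 : ∑ j : Fin k, (0:Fin k → ℝ) j * (0:Fin k → ℝ) j = 0 :=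
          Finset.sum_eq_zero (fun j _ => by simp)
        rw [h0, hxsum, hx'1, hαY, hαi, ht]; ring
      have hobj : quadObj δ e ζ η (fun i => if i = i₁ then t else if i = i₀ then x' else 0) (0 : Fin k → ℝ) (0 : Fin k → ℝ)
          < M := by
        simp only [quadObj]
        have h0 : ∑ j : Fin k, (ζ j * (0:Fin k → ℝ) j * (0:Fin k → ℝ) j
            + (1/2) * (0:Fin k → ℝ) j ^ 2 + η j * (0:Fin k → ℝ) j) = 0 :=
          Finset.sum_eq_zero (fun j _ => by simp)
        rw [h0, hxsum']
        have hb1 : (1/2) * δ i₁ * t ^ 2 + e i₁ * t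
            = (1/2) * δ i₁ * (α i₀) ^ 2 * (b i₁) ^ 2 * s ^ 2 + (-(e i₁) * (α i₀ * b i₁)) * s := by
          rw [ht]; ring
        have hb3 : δ i₀ * Y + e i₀ * 0 = δ i₀ * (c₁ / α i₀) + (δ i₀ * b i₁ ^ 2) * s := by
          rw [hY]; ring
        nlinarith [hx'2, hs]
      exact ⟨_, 0, 0, by rw [hcon], by rw [hcon]; exact hc₁₂, hobj⟩
/-- Theorem 3.5 of Jiang–Li–Wu: under Assumption 3.2, the interval-constrained GTRS (IP) in
separated canonical form has the same optimal value as its SOCP reformulation (IP₁); if (IP₁)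
attains its optimal value, it does so at a point with `½xᵢ² = yᵢ` for all `i`; and if two
`2×2` blocks have different eigenvalues then (IP) is unbounded from below. -/
theorem stmt_17 (l k : ℕ) (δ e α b : Fin l → ℝ) (ζ η : Fin k → ℝ) (c₀ c₁ c₂ : ℝ)
    (hc₁₂ : c₁ ≤ c₂) (hc₀ : c₀ = -(1/2) * ∑ j, η j ^ 2)
    (hfeas : ∃ (x : Fin l → ℝ) (u w : Fin k → ℝ),
      c₁ ≤ quadConBar α b x u w ∧ quadConBar α b x u w ≤ c₂)
    (hnd₁ : ¬ DegenerateCase l k α b c₁) (hnd₂ : ¬ DegenerateCase l k α b c₂)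
    (hAne : Asmat l k α ≠ 0) :
    sInf {v : EReal | ∃ (x : Fin l → ℝ) (u w : Fin k → ℝ),
        c₁ ≤ quadConBar α b x u w ∧ quadConBar α b x u w ≤ c₂ ∧
        v = (quadObj δ e ζ η x u w : EReal)} =
      socpValInt δ e α b ζ c₀ c₁ c₂ ∧
    ((∃ (x y : Fin l → ℝ) (z : Fin k → ℝ),
        c₁ ≤ socpConLhs α b x y z ∧ socpConLhs α b x y z ≤ c₂ ∧
        (∀ i, (1/2) * x i ^ 2 ≤ y i) ∧
        (socpObj δ e ζ c₀ x y z : EReal) = socpValInt δ e α b ζ c₀ c₁ c₂) →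
      ∃ (x y : Fin l → ℝ) (z : Fin k → ℝ),
        c₁ ≤ socpConLhs α b x y z ∧ socpConLhs α b x y z ≤ c₂ ∧
        (∀ i, (1/2) * x i ^ 2 ≤ y i) ∧ (∀ i, (1/2) * x i ^ 2 = y i) ∧
        (socpObj δ e ζ c₀ x y z : EReal) = socpValInt δ e α b ζ c₀ c₁ c₂) ∧
    ((∃ i j : Fin k, i ≠ j ∧ ζ i ≠ ζ j) →
      ∀ M : ℝ, ∃ (x : Fin l → ℝ) (u w : Fin k → ℝ),
        c₁ ≤ quadConBar α b x u w ∧ quadConBar α b x u w ≤ c₂ ∧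
        quadObj δ e ζ η x u w < M) := by
  set V : Set EReal := {v : EReal | ∃ (x : Fin l → ℝ) (u w : Fin k → ℝ),
      c₁ ≤ quadConBar α b x u w ∧ quadConBar α b x u w ≤ c₂ ∧
      v = (quadObj δ e ζ η x u w : EReal)} with hVdef
  have hmemV : ∀ (x : Fin l → ℝ) (u w : Fin k → ℝ),
      c₁ ≤ quadConBar α b x u w → quadConBar α b x u w ≤ c₂ →
      sInf V ≤ (quadObj δ e ζ η x u w : EReal) :=
    fun x u w h1 h2 => sInf_le ⟨x, u, w, h1, h2, rfl⟩
  have hWle : ∀ (x y : Fin l → ℝ) (z : Fin k → ℝ),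
      c₁ ≤ socpConLhs α b x y z → socpConLhs α b x y z ≤ c₂ →
      (∀ i, (1/2) * x i ^ 2 ≤ y i) →
      socpValInt δ e α b ζ c₀ c₁ c₂ ≤ (socpObj δ e ζ c₀ x y z : EReal) :=
    fun x y z h1 h2 h3 => sInf_le ⟨x, y, z, h1, h2, h3, rfl⟩
  have hbotV : (∀ M : ℝ, ∃ (x : Fin l → ℝ) (u w : Fin k → ℝ),
      c₁ ≤ quadConBar α b x u w ∧ quadConBar α b x u w ≤ c₂ ∧
      quadObj δ e ζ η x u w < M) → sInf V = ⊥ := by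
    intro h
    apply ereal_eq_bot
    intro M
    obtain ⟨x, u, w, h1, h2, h3⟩ := h M
    exact le_trans (hmemV x u w h1 h2) (by exact_mod_cast le_of_lt h3)
  refine ⟨le_antisymm ?_ ?_, ?_, ?_⟩
  · -- sInf V ≤ socpValInt
    refine le_sInf ?_
    rintro v ⟨x, y, z, h1, h2, hxy, rfl⟩
    by_cases hζe : ∃ j j' : Fin k, ζ j ≠ ζ j'
    · obtain ⟨j, j', hzz⟩ := hζe
      have hne : j ≠ j' := fun h => hzz (by rw [h])
      rw [hbotV (fun M => unb_zeta δ e α b ζ η c₁ c₂ hc₁₂ hne hzz M)]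
      exact bot_le
    · push_neg at hζe
      by_cases hαδ : ∀ i, α i ≠ 0 ∨ (α i = 0 ∧ 0 ≤ δ i)
      · obtain ⟨x', hx'1, hx'2⟩ := transferSlack α b δ e x y hαδ hxy
        rcases isEmpty_or_nonempty (Fin k) with hk | hk
        · haveI := hk
          have hz0 : ∑ j, z j = 0 := by rw [Finset.univ_eq_empty, Finset.sum_empty]
          have hζz0 : ∑ j, ζ j * z j = 0 := by rw [Finset.univ_eq_empty, Finset.sum_empty]
          have hc00 : c₀ = 0 := by
            rw [hc₀, Finset.univ_eq_empty, Finset.sum_empty]; ring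
          have h00 : ∑ j : Fin k, (0 : Fin k → ℝ) j * (0 : Fin k → ℝ) j = 0 :=
            Finset.sum_eq_zero (fun j _ => by simp)
          have h01 : ∑ j : Fin k, (ζ j * (0 : Fin k → ℝ) j * (0 : Fin k → ℝ) j
              + (1/2) * (0 : Fin k → ℝ) j ^ 2 + η j * (0 : Fin k → ℝ) j) = 0 :=
            Finset.sum_eq_zero (fun j _ => by simp)
          have hcon : quadConBar α b x' (0 : Fin k → ℝ) (0 : Fin k → ℝ)
              = socpConLhs α b x y z := by
            simp only [quadConBar, socpConLhs]
            rw [hx'1, hz0, h00]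
          have hobj : quadObj δ e ζ η x' (0 : Fin k → ℝ) (0 : Fin k → ℝ)
              ≤ socpObj δ e ζ c₀ x y z := by
            simp only [quadObj, socpObj]
            rw [hζz0, hc00, h01]
            linarith [hx'2]
          exact le_trans (hmemV x' 0 0 (by rw [hcon]; exact h1) (by rw [hcon]; exact h2))
            (by exact_mod_cast hobj)
        · obtain ⟨j₀⟩ := hk
          apply ereal_le_coe_of_forall
          intro ε hε
          set t : ℝ := if η j₀ = 0 then Real.sqrt (min ε 1) else -η j₀ with htdef
          have ht0 : t ≠ 0 := by
            rw [htdef]; split_ifs with h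
            · exact ne_of_gt (Real.sqrt_pos.mpr (lt_min hε one_pos))
            · exact neg_ne_zero.mpr h
          have ht2 : (1/2) * (t + η j₀) ^ 2 ≤ ε := by
            rw [htdef]; split_ifs with h
            · rw [h, add_zero, Real.sq_sqrt (le_of_lt (lt_min hε one_pos))]
              have := min_le_left ε 1; linarith
            · have : -η j₀ + η j₀ = 0 := by ring
              rw [this]; norm_num; linarith
          set Z : ℝ := ∑ j, z j with hZ
          set u : Fin k → ℝ := fun j => if j = j₀ then Z / t else 0 with hu
          set w : Fin k → ℝ := fun j => if j = j₀ then t else -η j with hw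
          have huwp : ∀ j, u j * w j = (if j = j₀ then Z else 0) := by
            intro j
            by_cases h : j = j₀
            · subst h; simp only [hu, hw, if_pos rfl]; exact div_mul_cancel₀ Z ht0
            · simp [hu, hw, h]
          have huw : ∑ j, u j * w j = Z := by
            rw [Finset.sum_congr rfl fun j _ => huwp j, sum_one_plain]
          have hζuwp : ∀ j, ζ j * u j * w j = (if j = j₀ then ζ j₀ * Z else 0) := by
            intro j
            rw [mul_assoc, huwp j]
            by_cases h : j = j₀
            · subst h; rw [if_pos rfl, if_pos rfl]
            · rw [if_neg h, if_neg h, mul_zero]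
          have hζuw : ∑ j, ζ j * u j * w j = ζ j₀ * Z := by
            rw [Finset.sum_congr rfl fun j _ => hζuwp j, sum_one_plain]
          have hwterm : ∑ j, ((1/2) * w j ^ 2 + η j * w j)
              = ((1/2) * t ^ 2 + η j₀ * t) - ((1/2) * (-η j₀) ^ 2 + η j₀ * (-η j₀))
                + ∑ j, ((1/2) * (-η j) ^ 2 + η j * (-η j)) :=
            sum_subst j₀ (fun j ww => (1/2) * ww ^ 2 + η j * ww) (fun j => -η j) t
          have hsum_eta : ∑ j, ((1/2) * (-η j) ^ 2 + η j * (-η j))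
              = -((1/2) * ∑ j, η j ^ 2) := by
            rw [Finset.mul_sum, ← Finset.sum_neg_distrib]
            exact Finset.sum_congr rfl fun j _ => by ring
          have hwsum : ∑ j, ((1/2) * w j ^ 2 + η j * w j) = c₀ + (1/2) * (t + η j₀) ^ 2 := by
            rw [hwterm, hsum_eta, hc₀]; ring
          have hcon : quadConBar α b x' u w = socpConLhs α b x y z := by
            simp only [quadConBar, socpConLhs]
            rw [hx'1, huw]
          have hζz : ∑ j, ζ j * z j = ζ j₀ * Z := by
            rw [hZ, Finset.mul_sum]
            exact Finset.sum_congr rfl fun j _ => by rw [hζe j j₀]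
          have hsplit : ∑ j, (ζ j * u j * w j + (1/2) * w j ^ 2 + η j * w j)
              = (∑ j, ζ j * u j * w j) + ∑ j, ((1/2) * w j ^ 2 + η j * w j) := by
            rw [← Finset.sum_add_distrib]
            exact Finset.sum_congr rfl fun j _ => by ring
          have hobj : quadObj δ e ζ η x' u w ≤ socpObj δ e ζ c₀ x y z + ε := by
            simp only [quadObj, socpObj]
            rw [hsplit, hζuw, hwsum, hζz]
            linarith [hx'2, ht2]
          exact le_trans (hmemV x' u w (by rw [hcon]; exact h1) (by rw [hcon]; exact h2))
            (by exact_mod_cast hobj)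
      · push_neg at hαδ
        obtain ⟨i₁, hα1, himp⟩ := hαδ
        have hδ1 : δ i₁ < 0 := himp hα1
        have hex : Nonempty (Fin k) ∨ ∃ i₀ : Fin l, α i₀ ≠ 0 := by
          rcases isEmpty_or_nonempty (Fin k) with hk | hk
          · right
            have hk0 : k = 0 := by
              rcases Nat.eq_zero_or_pos k with h | h
              · exact h
              · exact (hk.false ⟨0, h⟩).elim
            subst hk0
            exact exists_alpha_ne α hAne
          · exact Or.inl hk
        rw [hbotV (fun M => unb_alpha0 δ e α b ζ η c₁ c₂ hc₁₂ hfeas hα1 hδ1 hex M)]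
        exact bot_le
  · -- socpValInt ≤ sInf V
    refine le_sInf ?_
    rintro v ⟨x, u, w, h1, h2, rfl⟩
    have hcon : socpConLhs α b x (fun i => (1/2) * x i ^ 2) (fun j => u j * w j)
        = quadConBar α b x u w := by
      simp only [socpConLhs, quadConBar]
      congr 1
      exact Finset.sum_congr rfl fun i _ => by ring
    have hobj : socpObj δ e ζ c₀ x (fun i => (1/2) * x i ^ 2) (fun j => u j * w j)
        ≤ quadObj δ e ζ η x u w := by
      simp only [socpObj, quadObj, hc₀]
      have hxeq : ∑ i, (δ i * ((1/2) * x i ^ 2) + e i * x i)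
          = ∑ i, ((1/2) * δ i * x i ^ 2 + e i * x i) :=
        Finset.sum_congr rfl fun i _ => by ring
      have hksplit : ∑ j, (ζ j * u j * w j + (1/2) * w j ^ 2 + η j * w j)
          = (∑ j, ζ j * (u j * w j))
            + ((∑ j, ((1/2) * w j ^ 2 + η j * w j + (1/2) * η j ^ 2))
              - (1/2) * ∑ j, η j ^ 2) := by
        rw [Finset.mul_sum, ← Finset.sum_sub_distrib, ← Finset.sum_add_distrib]
        exact Finset.sum_congr rfl fun j _ => by ring
      have hpos : 0 ≤ ∑ j, ((1/2) * w j ^ 2 + η j * w j + (1/2) * η j ^ 2) :=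
        Finset.sum_nonneg fun j _ => by nlinarith [sq_nonneg (w j + η j)]
      rw [hxeq, hksplit]
      linarith
    exact le_trans (hWle x _ _ (by rw [hcon]; exact h1) (by rw [hcon]; exact h2)
      (fun i => le_refl _)) (by exact_mod_cast hobj)
  · -- attainment
    rintro ⟨x, y, z, h1, h2, hxy, hval⟩
    by_cases hαδ : ∀ i, α i ≠ 0 ∨ (α i = 0 ∧ 0 ≤ δ i)
    · choose x' hA hB using fun i => oneDim (α i) (b i) (δ i) (e i) (x i) (y i) (hαδ i) (hxy i)
      have hcon : socpConLhs α b x' (fun i => (1/2) * x' i ^ 2) z = socpConLhs α b x y z := by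
        simp only [socpConLhs]
        congr 1
        calc ∑ i, (α i * ((1/2) * x' i ^ 2) + b i * x' i)
            = ∑ i, ((1/2) * α i * x' i ^ 2 + b i * x' i) :=
              Finset.sum_congr rfl fun i _ => by ring
          _ = ∑ i, (α i * y i + b i * x i) := Finset.sum_congr rfl fun i _ => hA i
      have hv : socpObj δ e ζ c₀ x' (fun i => (1/2) * x' i ^ 2) z
          ≤ socpObj δ e ζ c₀ x y z := by
        simp only [socpObj]
        have h : ∑ i, (δ i * ((1/2) * x' i ^ 2) + e i * x' i)
            ≤ ∑ i, (δ i * y i + e i * x i) := by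
          calc ∑ i, (δ i * ((1/2) * x' i ^ 2) + e i * x' i)
              = ∑ i, ((1/2) * δ i * x' i ^ 2 + e i * x' i) :=
                Finset.sum_congr rfl fun i _ => by ring
            _ ≤ ∑ i, (δ i * y i + e i * x i) := Finset.sum_le_sum fun i _ => hB i
        linarith
      refine ⟨x', fun i => (1/2) * x' i ^ 2, z, by rw [hcon]; exact h1,
        by rw [hcon]; exact h2, fun i => le_refl _, fun i => rfl, ?_⟩
      refine le_antisymm ?_ (hWle x' _ z (by rw [hcon]; exact h1) (by rw [hcon]; exact h2)
        (fun i => le_refl _))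
      rw [← hval]
      exact_mod_cast hv
    · exfalso
      push_neg at hαδ
      obtain ⟨i₁, hα1, himp⟩ := hαδ
      have hδ1 : δ i₁ < 0 := himp hα1
      have hS1 : ∑ i, (α i * (if i = i₁ then y i₁ + 1 else y i) + b i * x i)
          = (α i₁ * (y i₁ + 1) + b i₁ * x i₁) - (α i₁ * y i₁ + b i₁ * x i₁)
            + ∑ i, (α i * y i + b i * x i) :=
        sum_subst i₁ (fun m q => α m * q + b m * x m) y (y i₁ + 1)
      have hS2 : ∑ i, (δ i * (if i = i₁ then y i₁ + 1 else y i) + e i * x i)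
          = (δ i₁ * (y i₁ + 1) + e i₁ * x i₁) - (δ i₁ * y i₁ + e i₁ * x i₁)
            + ∑ i, (δ i * y i + e i * x i) :=
        sum_subst i₁ (fun m q => δ m * q + e m * x m) y (y i₁ + 1)
      have hcon : socpConLhs α b x (fun i => if i = i₁ then y i₁ + 1 else y i) z
          = socpConLhs α b x y z := by
        simp only [socpConLhs]
        rw [hS1, hα1]; ring
      have hxy' : ∀ i, (1/2) * x i ^ 2 ≤ (fun i => if i = i₁ then y i₁ + 1 else y i) i := by
        intro i
        dsimp only
        by_cases h : i = i₁
        · subst h; rw [if_pos rfl]; linarith [hxy i]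
        · rw [if_neg h]; exact hxy i
      have hobj : socpObj δ e ζ c₀ x (fun i => if i = i₁ then y i₁ + 1 else y i) z
          = socpObj δ e ζ c₀ x y z + δ i₁ := by
        simp only [socpObj]
        rw [hS2]; ring
      have hmem := hWle x (fun i => if i = i₁ then y i₁ + 1 else y i) z
        (by rw [hcon]; exact h1) (by rw [hcon]; exact h2) hxy'
      rw [hobj, ← hval] at hmem
      have : (socpObj δ e ζ c₀ x y z : ℝ) ≤ socpObj δ e ζ c₀ x y z + δ i₁ := by
        exact_mod_cast hmem
      linarith
  · -- unboundedness when two ζ's differ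
    rintro ⟨i, j, hij, hzz⟩ M
    exact unb_zeta δ e α b ζ η c₁ c₂ hc₁₂ hij hzz M
end

section
/- Consider f as in (P₁), define h̄(x,u,w) = Σᵢ(½αᵢxᵢ² + bᵢxᵢ) + Σⱼ uⱼwⱼ, let c₁ ≤ c₂ and v ∈ ℝ, and suppose: (i) there exists a point v̄ with c₁ ≤ h̄(v̄) ≤ c₂; (ii) for each i ∈ {1,2}, it is NOT the case that A_s is positive semidefinite and there exists ω with b_s = A_sω and cᵢ = ½ωᵀA_sω; and (iii) A_s ≠ 0. Then the following are equivalent: (I₁) for every (x,u,w), c₁ ≤ h̄(x,u,w) ≤ c₂ implies f(x,u,w) + v ≥ 0; (I₂) for every x, y ∈ ℝ^l and z ∈ ℝ^k satisfying c₁ ≤ Σᵢ(αᵢyᵢ + bᵢxᵢ) + Σⱼ zⱼ ≤ c₂ and ½xᵢ² ≤ yᵢ for all i, one has Σᵢ(δᵢyᵢ + eᵢxᵢ) + Σⱼ ζⱼzⱼ + c₀ + v ≥ 0. -/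
open scoped Classical
open Matrix

/-!
The relaxation (I₂) replaces each `½ xᵢ²` by some `yᵢ ≥ ½ xᵢ²` and each product `uⱼ wⱼ` by `zⱼ`.
Substituting `y = ½ x²`, `z = u w` and using `½ w² + η w ≥ -½ η²` gives (I₂) ⇒ (I₁).
Conversely, a relaxed point is lifted to points of (I₁) with the same value of `h̄` and an
objective exceeding the relaxed one by an arbitrarily small amount.
If `k > 0`, take `x'ᵢ = ±√(2 yᵢ)` with the sign that does not increase the objective and absorb
the change of `Σ bᵢ xᵢ` into `z₁`; `uⱼ wⱼ = zⱼ` is realised with `wⱼ = -ηⱼ`, or with a small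
`wⱼ = τ` when `ηⱼ = 0`.
If `k = 0`, `A_s ≠ 0` provides some `α_q ≠ 0`. A coordinate with `αᵢ ≠ 0` is matched by a root of
`½ αᵢ r² + bᵢ r = αᵢ yᵢ + bᵢ xᵢ`: the relaxed `xᵢ` lies between the two roots, so one of them is
on the side that does not increase the objective. A coordinate with `αᵢ = 0 ≤ δᵢ` keeps `xᵢ`.
If some `αₚ = 0 > δₚ`, the objective is unbounded below on every level set of `h̄`: send `xₚ`
to infinity and compensate the change of `h̄` in the coordinate `q`.
-/

lemma exists_sq_eq_and_mul_le {s d : ℝ} (h : s ^ 2 ≤ d) (c : ℝ) :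
    ∃ t, t ^ 2 = d ∧ c * t ≤ c * s := by
  have hs : |s| ≤ √d := Real.abs_le_sqrt h
  have hd : √d ^ 2 = d := Real.sq_sqrt ((sq_nonneg s).trans h)
  rcases le_total 0 c with hc | hc
  · refine ⟨-√d, by rw [neg_sq, hd], ?_⟩
    nlinarith [neg_abs_le s]
  · refine ⟨√d, hd, ?_⟩
    nlinarith [le_abs_self s]

lemma exists_quadratic_root_and_le {a : ℝ} (ha : a ≠ 0) {b x γ : ℝ}
    (h : a * ((1/2) * a * x ^ 2 + b * x - γ) ≤ 0) (d e : ℝ) :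
    ∃ r, (1/2) * a * r ^ 2 + b * r = γ ∧
      (1/2) * d * r ^ 2 + e * r ≤ d / a * γ + (e - d / a * b) * x := by
  -- completing the square: `½ a r² + b r = γ` iff `(a r + b)² = b² + 2 a γ`
  obtain ⟨t, ht, hct⟩ := exists_sq_eq_and_mul_le (s := a * x + b) (d := b ^ 2 + 2 * a * γ)
    (by nlinarith) ((e - d / a * b) / a)
  refine ⟨(t - b) / a, ?_, ?_⟩
  · field_simp
    linear_combination ht
  · have hr : (1/2) * d * ((t - b) / a) ^ 2 + e * ((t - b) / a)
        = d / a * ((1/2) * a * ((t - b) / a) ^ 2 + b * ((t - b) / a))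
          + (e - d / a * b) / a * (t - b) := by
      field_simp
      ring
    have hγ : (1/2) * a * ((t - b) / a) ^ 2 + b * ((t - b) / a) = γ := by
      field_simp
      linear_combination ht
    have hx : (e - d / a * b) / a * (a * x + b - b) = (e - d / a * b) * x := by
      field_simp
      ring
    rw [hr, hγ]
    linarith

lemma exists_mul_nonpos_and_quadratic_le {A : ℝ} (hA : A < 0) (κ B C M : ℝ) :
    ∃ t, κ * t ≤ 0 ∧ A * t ^ 2 + B * t + C ≤ M := by
  set R := 1 + (|B| + |C - M|) / (-A) with hR
  have hR1 : 1 ≤ R := by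
    have : 0 ≤ (|B| + |C - M|) / (-A) := div_nonneg (by positivity) (by linarith)
    linarith
  have hAR : A * R = A - (|B| + |C - M|) := by
    rw [hR]
    field_simp [hA.ne]
    ring
  have hbound : A * R ^ 2 + |B| * R + C ≤ M := by
    have : A * R ^ 2 + |B| * R = R * (A - |C - M|) := by linear_combination R * hAR
    nlinarith [le_abs_self (C - M), abs_nonneg (C - M)]
  rcases le_total 0 κ with hκ | hκ
  · refine ⟨-R, by nlinarith, ?_⟩
    nlinarith [neg_abs_le B]
  · refine ⟨R, by nlinarith, ?_⟩
    nlinarith [le_abs_self B]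

lemma exists_lift_eq_and_le (a b d e : ℝ) {x y : ℝ} (hy : (1/2) * x ^ 2 ≤ y) :
    ∃ r, (1/2) * a * r ^ 2 + b * r = a * y + b * x ∧
      (a ≠ 0 ∨ 0 ≤ d → (1/2) * d * r ^ 2 + e * r ≤ d * y + e * x) := by
  by_cases ha : a = 0
  · refine ⟨x, by rw [ha]; ring, fun h => ?_⟩
    have hd : 0 ≤ d := h.resolve_left (not_not.mpr ha)
    nlinarith
  · obtain ⟨r, hr, hfr⟩ := exists_quadratic_root_and_le ha (b := b) (x := x) (γ := a * y + b * x)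
      (by nlinarith [sq_nonneg a]) d e
    refine ⟨r, hr, fun _ => hfr.trans_eq ?_⟩
    field_simp
    ring

lemma sum_apply_update {ι M : Type*} [Fintype ι] [DecidableEq ι] [AddCommGroup M]
    (φ : ι → ℝ → M) (X : ι → ℝ) (p : ι) (t : ℝ) :
    ∑ i, φ i (Function.update X p t i) = ∑ i, φ i (X i) + (φ p t - φ p (X p)) := by
  simp_rw [Function.apply_update φ X p t]
  rw [Finset.sum_update_of_mem (Finset.mem_univ p),
    Finset.sum_eq_add_sum_sdiff_singleton_of_mem (Finset.mem_univ p) (fun i => φ i (X i))]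
  abel

noncomputable def sepQuad {l : ℕ} (a b x : Fin l → ℝ) : ℝ :=
  ∑ i, ((1/2) * a i * x i ^ 2 + b i * x i)

noncomputable def sepQuadLift {l : ℕ} (a b x y : Fin l → ℝ) : ℝ :=
  ∑ i, (a i * y i + b i * x i)

lemma sepQuad_update {l : ℕ} (a b X : Fin l → ℝ) (p : Fin l) (t : ℝ) :
    sepQuad a b (Function.update X p t) = sepQuad a b X +
      ((1/2) * a p * t ^ 2 + b p * t - ((1/2) * a p * X p ^ 2 + b p * X p)) :=
  sum_apply_update (fun i s => (1/2) * a i * s ^ 2 + b i * s) X p t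

lemma exists_sepQuad_eq_and_sepQuad_le {l : ℕ} {α b δ e : Fin l → ℝ} {p q : Fin l}
    (hq : α q ≠ 0) (hp : α p = 0) (hδp : δ p < 0) (X₀ : Fin l → ℝ) (M : ℝ) :
    ∃ X, sepQuad α b X = sepQuad α b X₀ ∧ sepQuad δ e X ≤ M := by
  have hpq : p ≠ q := by
    rintro rfl
    exact hq hp
  -- the sign condition `α q * b p * t ≤ 0` keeps the compensating equation at `q` solvable
  obtain ⟨t, hκt, ht⟩ := exists_mul_nonpos_and_quadratic_le (A := (1/2) * δ p) (by linarith)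
    (α q * b p) (δ p * X₀ p + e p - δ q / α q * b p) (sepQuad δ e X₀) M
  obtain ⟨r, hr, hfr⟩ := exists_quadratic_root_and_le hq (b := b q) (x := X₀ q)
    (γ := (1/2) * α q * X₀ q ^ 2 + b q * X₀ q - b p * t)
    (by linear_combination hκt) (δ q) (e q)
  have hid : δ q / α q * ((1/2) * α q * X₀ q ^ 2) = (1/2) * δ q * X₀ q ^ 2 := by
    field_simp
  refine ⟨Function.update (Function.update X₀ p (X₀ p + t)) q r, ?_, ?_⟩
  · rw [sepQuad_update, sepQuad_update, Function.update_of_ne hpq.symm, hr, hp]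
    ring
  · rw [sepQuad_update, sepQuad_update, Function.update_of_ne hpq.symm]
    linear_combination ht + hfr + hid

lemma exists_sepQuad_eq_lift_and_le {l : ℕ} {α b δ e : Fin l → ℝ} (hα : ∃ q, α q ≠ 0)
    {x y : Fin l → ℝ} (hy : ∀ i, (1/2) * x i ^ 2 ≤ y i) :
    ∃ X, sepQuad α b X = sepQuadLift α b x y ∧ sepQuad δ e X ≤ sepQuadLift δ e x y := by
  choose X hg hf using fun i => exists_lift_eq_and_le (α i) (b i) (δ i) (e i) (hy i)
  have hgX : sepQuad α b X = sepQuadLift α b x y := Finset.sum_congr rfl fun i _ => hg i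
  by_cases hB : ∃ p, α p = 0 ∧ δ p < 0
  · obtain ⟨q, hq⟩ := hα
    obtain ⟨p, hp, hδp⟩ := hB
    obtain ⟨X', hgX', hfX'⟩ := exists_sepQuad_eq_and_sepQuad_le (b := b) (e := e) hq hp hδp X
      (sepQuadLift δ e x y)
    exact ⟨X', hgX'.trans hgX, hfX'⟩
  · simp only [not_exists, not_and, not_lt] at hB
    refine ⟨X, hgX, Finset.sum_le_sum fun i _ => hf i ?_⟩
    rw [or_iff_not_imp_left, not_not]
    exact hB i

lemma exists_mul_eq_and_le (η z : ℝ) {τ : ℝ} (hτ : 0 < τ) :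
    ∃ u w : ℝ, u * w = z ∧ (1/2) * w ^ 2 + η * w ≤ (1/2) * τ ^ 2 - (1/2) * η ^ 2 := by
  by_cases hη : η = 0
  · refine ⟨z / τ, τ, div_mul_cancel₀ z hτ.ne', ?_⟩
    simp [hη]
  · refine ⟨z / (-η), -η, div_mul_cancel₀ z (neg_ne_zero.mpr hη), ?_⟩
    nlinarith [sq_nonneg τ]

lemma exists_mul_eq_and_sum_le {k : ℕ} (ζ η z : Fin k → ℝ) {τ : ℝ} (hτ : 0 < τ) :
    ∃ u w : Fin k → ℝ, (∀ j, u j * w j = z j) ∧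
      ∑ j, (ζ j * u j * w j + (1/2) * w j ^ 2 + η j * w j)
        ≤ ∑ j, ζ j * z j - (1/2) * ∑ j, η j ^ 2 + k * ((1/2) * τ ^ 2) := by
  choose u w huw hle using fun j => exists_mul_eq_and_le (η j) (z j) hτ
  refine ⟨u, w, huw, ?_⟩
  calc ∑ j, (ζ j * u j * w j + (1/2) * w j ^ 2 + η j * w j)
      ≤ ∑ j, (ζ j * z j + ((1/2) * τ ^ 2 - (1/2) * η j ^ 2)) :=
        Finset.sum_le_sum fun j _ => by rw [mul_assoc, huw j]; linarith [hle j]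
    _ = ∑ j, ζ j * z j - (1/2) * ∑ j, η j ^ 2 + k * ((1/2) * τ ^ 2) := by
        rw [Finset.sum_add_distrib, Finset.sum_sub_distrib, Finset.sum_const, Finset.card_univ,
          Fintype.card_fin, nsmul_eq_mul, ← Finset.mul_sum]
        ring

lemma exists_quadConBar_eq_and_quadObj_le_of_pos {l k : ℕ} (hk : 0 < k)
    {δ e α b : Fin l → ℝ} {ζ η : Fin k → ℝ} {c₀ : ℝ} (hc₀ : c₀ = -(1/2) * ∑ j, η j ^ 2)
    {x y : Fin l → ℝ} (hy : ∀ i, (1/2) * x i ^ 2 ≤ y i) (z : Fin k → ℝ) {τ : ℝ} (hτ : 0 < τ) :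
    ∃ x' u w, quadConBar α b x' u w = socpConLhs α b x y z ∧
      quadObj δ e ζ η x' u w ≤ socpObj δ e ζ c₀ x y z + k * ((1/2) * τ ^ 2) := by
  set j₀ : Fin k := ⟨0, hk⟩
  choose x' hx'sq hx'le using fun i =>
    exists_sq_eq_and_mul_le (s := x i) (d := 2 * y i) (by linarith [hy i]) (e i - ζ j₀ * b i)
  set D := ∑ i, b i * (x' i - x i) with hD
  obtain ⟨u, w, huw, hsum⟩ := exists_mul_eq_and_sum_le ζ η (z - Pi.single j₀ D) hτ
  have hg : sepQuad α b x' = sepQuadLift α b x y + D := by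
    rw [sepQuad, sepQuadLift, hD, ← Finset.sum_add_distrib]
    exact Finset.sum_congr rfl fun i _ => by rw [hx'sq i]; ring
  have hf : sepQuad δ e x' ≤ sepQuadLift δ e x y + ζ j₀ * D := by
    rw [sepQuad, sepQuadLift, hD, Finset.mul_sum, ← Finset.sum_add_distrib]
    exact Finset.sum_le_sum fun i _ => by rw [hx'sq i]; linarith [hx'le i]
  refine ⟨x', u, w, ?_, ?_⟩
  · change sepQuad α b x' + ∑ j, u j * w j = sepQuadLift α b x y + ∑ j, z j
    simp [hg, huw, Finset.sum_sub_distrib]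
  · change sepQuad δ e x' + ∑ j, (ζ j * u j * w j + (1/2) * w j ^ 2 + η j * w j)
      ≤ sepQuadLift δ e x y + ∑ j, ζ j * z j + c₀ + k * ((1/2) * τ ^ 2)
    simp only [Pi.sub_apply, mul_sub, Finset.sum_sub_distrib] at hsum
    simp only [Pi.single_apply, mul_ite, mul_zero, Finset.sum_ite_eq', Finset.mem_univ,
      if_true] at hsum
    linarith

lemma Asmat_zero_zero (l : ℕ) : Asmat l 0 0 = 0 := by
  ext i j
  simp [Asmat, show (i : ℕ) < l from i.isLt]

lemma exists_quadConBar_eq_and_quadObj_le {l k : ℕ} {δ e α b : Fin l → ℝ} {ζ η : Fin k → ℝ}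
    {c₀ : ℝ} (hc₀ : c₀ = -(1/2) * ∑ j, η j ^ 2) (hA : Asmat l k α ≠ 0)
    {x y : Fin l → ℝ} (hy : ∀ i, (1/2) * x i ^ 2 ≤ y i) (z : Fin k → ℝ) {τ : ℝ} (hτ : 0 < τ) :
    ∃ x' u w, quadConBar α b x' u w = socpConLhs α b x y z ∧
      quadObj δ e ζ η x' u w ≤ socpObj δ e ζ c₀ x y z + k * ((1/2) * τ ^ 2) := by
  rcases Nat.eq_zero_or_pos k with rfl | hk
  · have hα : ∃ q, α q ≠ 0 := by
      by_contra! hα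
      exact hA (funext hα ▸ Asmat_zero_zero l)
    obtain ⟨X, hg, hf⟩ := exists_sepQuad_eq_lift_and_le (δ := δ) (e := e) (b := b) hα hy
    refine ⟨X, 0, 0, ?_, ?_⟩
    · simpa [quadConBar, socpConLhs, sepQuad, sepQuadLift] using hg
    · simpa [quadObj, socpObj, sepQuad, sepQuadLift, hc₀] using hf
  · exact exists_quadConBar_eq_and_quadObj_le_of_pos hk hc₀ hy z hτ

lemma nonneg_of_forall_pos_nonneg_add_mul_sq {T c : ℝ} (h : ∀ τ > 0, 0 ≤ T + c * τ ^ 2) :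
    0 ≤ T := by
  have hlim : Filter.Tendsto (fun τ : ℝ => T + c * τ ^ 2) (nhdsWithin 0 (Set.Ioi 0)) (nhds T) := by
    have : Continuous fun τ : ℝ => T + c * τ ^ 2 := by fun_prop
    simpa using (this.tendsto 0).mono_left nhdsWithin_le_nhds
  exact ge_of_tendsto hlim (eventually_nhdsWithin_of_forall h)

lemma socpConLhs_half_sq_mul {l k : ℕ} (α b x : Fin l → ℝ) (u w : Fin k → ℝ) :
    socpConLhs α b x (fun i => (1/2) * x i ^ 2) (fun j => u j * w j) = quadConBar α b x u w := by
  simp only [socpConLhs, quadConBar]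
  congr 1
  exact Finset.sum_congr rfl fun i _ => by ring

lemma socpObj_half_sq_mul_le {l k : ℕ} (δ e : Fin l → ℝ) (ζ η : Fin k → ℝ) {c₀ : ℝ}
    (hc₀ : c₀ = -(1/2) * ∑ j, η j ^ 2) (x : Fin l → ℝ) (u w : Fin k → ℝ) :
    socpObj δ e ζ c₀ x (fun i => (1/2) * x i ^ 2) (fun j => u j * w j) ≤ quadObj δ e ζ η x u w := by
  simp only [socpObj, quadObj, hc₀]
  have hx : ∑ i, (δ i * ((1/2) * x i ^ 2) + e i * x i)
      = ∑ i, ((1/2) * δ i * x i ^ 2 + e i * x i) :=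
    Finset.sum_congr rfl fun i _ => by ring
  have huw : ∑ j, (ζ j * u j * w j + (1/2) * w j ^ 2 + η j * w j)
      = ∑ j, ζ j * (u j * w j) + ∑ j, ((1/2) * w j ^ 2 + η j * w j) := by
    rw [← Finset.sum_add_distrib]
    exact Finset.sum_congr rfl fun j _ => by ring
  have hw : -(1/2) * ∑ j, η j ^ 2 ≤ ∑ j, ((1/2) * w j ^ 2 + η j * w j) := by
    rw [Finset.mul_sum]
    exact Finset.sum_le_sum fun j _ => by nlinarith [sq_nonneg (w j + η j)]
  linarith

theorem stmt_19_general (l k : ℕ) (δ e α b : Fin l → ℝ) (ζ η : Fin k → ℝ) (c₀ c₁ c₂ v : ℝ)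
    (hc₀ : c₀ = -(1/2) * ∑ j, η j ^ 2)
    (hAne : Asmat l k α ≠ 0) :
    ((∀ (x : Fin l → ℝ) (u w : Fin k → ℝ),
        c₁ ≤ quadConBar α b x u w → quadConBar α b x u w ≤ c₂ →
        0 ≤ quadObj δ e ζ η x u w + v) ↔
      (∀ (x y : Fin l → ℝ) (z : Fin k → ℝ),
        c₁ ≤ socpConLhs α b x y z → socpConLhs α b x y z ≤ c₂ →
        (∀ i, (1/2) * x i ^ 2 ≤ y i) →
        0 ≤ socpObj δ e ζ c₀ x y z + v)) := by
  constructor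
  · intro hI x y z h₁ h₂ hy
    refine nonneg_of_forall_pos_nonneg_add_mul_sq (c := k * (1/2)) fun τ hτ => ?_
    obtain ⟨x', u, w, hcon, hobj⟩ :=
      exists_quadConBar_eq_and_quadObj_le (δ := δ) (e := e) (ζ := ζ) hc₀ hAne hy z hτ
    have := hI x' u w (hcon ▸ h₁) (hcon ▸ h₂)
    linarith
  · intro hI x u w h₁ h₂
    rw [← socpConLhs_half_sq_mul] at h₁ h₂
    have := hI x _ _ h₁ h₂ fun i => le_rfl
    linarith [socpObj_half_sq_mul_le δ e ζ η hc₀ x u w]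

/-- The simplified S-lemma with interval bounds of Jiang–Li–Wu (Section 3.2): under
Assumption 3.2, the implication `c₁ ≤ h̄(x,u,w) ≤ c₂ ⟹ f(x,u,w) + v ≥ 0` holds if and only
if the SOCP system of the reformulation certifies nonnegativity. -/
theorem stmt_19 (l k : ℕ) (δ e α b : Fin l → ℝ) (ζ η : Fin k → ℝ) (c₀ c₁ c₂ v : ℝ)
    (hc₁₂ : c₁ ≤ c₂) (hc₀ : c₀ = -(1/2) * ∑ j, η j ^ 2)
    (hfeas : ∃ (x : Fin l → ℝ) (u w : Fin k → ℝ),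
      c₁ ≤ quadConBar α b x u w ∧ quadConBar α b x u w ≤ c₂)
    (hnd₁ : ¬ DegenerateCase l k α b c₁) (hnd₂ : ¬ DegenerateCase l k α b c₂)
    (hAne : Asmat l k α ≠ 0) :
    ((∀ (x : Fin l → ℝ) (u w : Fin k → ℝ),
        c₁ ≤ quadConBar α b x u w → quadConBar α b x u w ≤ c₂ →
        0 ≤ quadObj δ e ζ η x u w + v) ↔
      (∀ (x y : Fin l → ℝ) (z : Fin k → ℝ),
        c₁ ≤ socpConLhs α b x y z → socpConLhs α b x y z ≤ c₂ →
        (∀ i, (1/2) * x i ^ 2 ≤ y i) →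
        0 ≤ socpObj δ e ζ c₀ x y z + v)) :=
  stmt_19_general l k δ e α b ζ η c₀ c₁ c₂ v hc₀ hAne
end
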